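/- arXiv:2410.00456 — 2 statements merged into one kernel-verified Lean document; each statement's English description precedes it below -/
import Mathlib

section
/- Let M ∈ ℝ^{n×n} be nonnegative and row substochastic, and suppose its associated digraph (edge j→i when M_{ij} > 0, i.e., following matrix indexing along rows) is such that from every node i with row sum equal to 1 there is a directed path (following nonzero entries) to some node j whose row sum is strictly less than 1. Then ρ(M) < 1. -/
open Matrix Filter Polynomial

noncomputable def specRadC {m : Type*} [Fintype m] [DecidableEq m]
    (M : Matrix m m ℂ) : ℝ :=
  sSup ((fun z : ℂ => ‖z‖) '' spectrum ℂ M)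

noncomputable def specRadR {m : Type*} [Fintype m] [DecidableEq m]
    (M : Matrix m m ℝ) : ℝ :=
  specRadC (M.map (algebraMap ℝ ℂ))

/-!
If every row of `M` has a path to a deficient row, then mass leaks out of every row: the row
sums of `M ^ k` are nonincreasing in `k`, and a positive entry `M i j` followed by a deficient
row of `M ^ k` at `j` makes row `i` of `M ^ (k + 1)` deficient. Hence, for some `K ≥ 1`, every row
sum of `M ^ K` is `< 1`. Gershgorin's theorem applied to `M ^ K` bounds
`‖μ‖ ^ K` by such a row sum for every eigenvalue `μ` of `M`, and the spectrum is finite, so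
`ρ(M) < 1`.
-/

open Finset

namespace Matrix

variable {ι : Type*}

theorem sum_mul_apply {R m n : Type*} [NonUnitalNonAssocSemiring R] [Fintype m] [Fintype n]
    (A : Matrix ι m R) (B : Matrix m n R) (i : ι) :
    ∑ j, (A * B) i j = ∑ t, A i t * ∑ j, B t j := by
  simp_rw [mul_apply, mul_sum]
  exact sum_comm

theorem exists_norm_le_sum_norm_of_mem_spectrum {K : Type*} [NormedField K] [Fintype ι]
    [DecidableEq ι] {A : Matrix ι ι K} {μ : K} (hμ : μ ∈ spectrum K A) :
    ∃ i, ‖μ‖ ≤ ∑ j, ‖A i j‖ := by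
  rw [← spectrum_toLin', ← Module.End.hasEigenvalue_iff_mem_spectrum] at hμ
  obtain ⟨i, hi⟩ := eigenvalue_mem_ball hμ
  refine ⟨i, ?_⟩
  rw [mem_closedBall_iff_norm'] at hi
  rw [← add_sum_erase _ _ (mem_univ i)]
  calc ‖μ‖ = ‖A i i - (A i i - μ)‖ := by rw [sub_sub_cancel]
    _ ≤ ‖A i i‖ + ‖A i i - μ‖ := norm_sub_le _ _
    _ ≤ _ := by gcongr

section NonnegSubstochastic

variable [Fintype ι] [DecidableEq ι] {M : Matrix ι ι ℝ}

theorem antitone_sum_pow_apply (hpos : ∀ i j, 0 ≤ M i j) (hrow : ∀ i, ∑ j, M i j ≤ 1) (i : ι) :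
    Antitone fun k ↦ ∑ j, (M ^ k) i j := by
  refine antitone_nat_of_succ_le fun k ↦ ?_
  rw [pow_succ, sum_mul_apply]
  calc ∑ t, (M ^ k) i t * ∑ j, M t j ≤ ∑ t, (M ^ k) i t * 1 := by
        gcongr with t
        · exact pow_apply_nonneg hpos k i t
        · exact hrow t
    _ = ∑ j, (M ^ k) i j := by simp_rw [mul_one]

theorem sum_pow_apply_le_one (hpos : ∀ i j, 0 ≤ M i j) (hrow : ∀ i, ∑ j, M i j ≤ 1) (k : ℕ)
    (i : ι) : ∑ j, (M ^ k) i j ≤ 1 := by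
  simpa [one_apply] using antitone_sum_pow_apply hpos hrow i (Nat.zero_le k)

theorem sum_pow_succ_apply_lt_one (hpos : ∀ i j, 0 ≤ M i j) (hrow : ∀ i, ∑ j, M i j ≤ 1)
    {k : ℕ} {i j : ι} (hij : 0 < M i j) (hj : ∑ t, (M ^ k) j t < 1) :
    ∑ t, (M ^ (k + 1)) i t < 1 := by
  rw [pow_succ', sum_mul_apply]
  calc ∑ u, M i u * ∑ t, (M ^ k) u t < ∑ u, M i u * 1 := by
        refine sum_lt_sum (fun u _ ↦ ?_) ⟨j, mem_univ j, mul_lt_mul_of_pos_left hj hij⟩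
        exact mul_le_mul_of_nonneg_left (sum_pow_apply_le_one hpos hrow k u) (hpos i u)
    _ ≤ 1 := by simpa using hrow i

theorem exists_sum_pow_apply_lt_one_of_reflTransGen (hpos : ∀ i j, 0 ≤ M i j)
    (hrow : ∀ i, ∑ j, M i j ≤ 1) {i j : ι} (hj : ∑ t, M j t < 1)
    (hij : Relation.ReflTransGen (fun a c ↦ 0 < M a c) i j) :
    ∃ k, ∑ t, (M ^ k) i t < 1 := by
  induction hij using Relation.ReflTransGen.head_induction_on with
  | refl => exact ⟨1, by simpa using hj⟩
  | head hab _ ih =>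
    obtain ⟨k, hk⟩ := ih
    exact ⟨k + 1, sum_pow_succ_apply_lt_one hpos hrow hab hk⟩

theorem eventually_sum_pow_apply_lt_one (hpos : ∀ i j, 0 ≤ M i j) (hrow : ∀ i, ∑ j, M i j ≤ 1)
    (hdef : ∀ i, ∃ k, ∑ j, (M ^ k) i j < 1) : ∀ᶠ k in atTop, ∀ i, ∑ j, (M ^ k) i j < 1 := by
  refine eventually_all.2 fun i ↦ ?_
  obtain ⟨k, hk⟩ := hdef i
  filter_upwards [eventually_ge_atTop k] with l hl
  exact (antitone_sum_pow_apply hpos hrow i hl).trans_lt hk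

theorem exists_norm_pow_le_sum_pow_apply_of_mem_spectrum (hpos : ∀ i j, 0 ≤ M i j) (K : ℕ)
    {μ : ℂ} (hμ : μ ∈ spectrum ℂ (M.map (algebraMap ℝ ℂ))) : ∃ i, ‖μ‖ ^ K ≤ ∑ j, (M ^ K) i j := by
  have hμK : μ ^ K ∈ spectrum ℂ ((M ^ K).map (algebraMap ℝ ℂ)) := by
    rw [← RingHom.mapMatrix_apply, map_pow]
    exact spectrum.pow_image_subset _ K ⟨μ, hμ, rfl⟩
  obtain ⟨i, hi⟩ := exists_norm_le_sum_norm_of_mem_spectrum hμK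
  refine ⟨i, ?_⟩
  simpa [norm_pow, abs_of_nonneg (pow_apply_nonneg hpos K i _)] using hi

end NonnegSubstochastic

end Matrix

theorem specRadC_lt_of_forall_norm_lt {ι : Type*} [Fintype ι] [DecidableEq ι]
    {A : Matrix ι ι ℂ} {r : ℝ} (hr : 0 < r) (h : ∀ μ ∈ spectrum ℂ A, ‖μ‖ < r) :
    specRadC A < r := by
  unfold specRadC
  rcases (spectrum ℂ A).eq_empty_or_nonempty with hA | hA
  · simpa [hA] using hr
  · rw [((A.finite_spectrum).image _).csSup_lt_iff (hA.image _)]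
    rintro _ ⟨μ, hμ, rfl⟩
    exact h μ hμ

/-- A nonnegative row-substochastic matrix such that every node with row sum
equal to `1` has a directed path (along positive entries) to a node with row
sum strictly less than `1` has spectral radius `< 1`. -/
theorem specRad_lt_one_of_path_to_deficient {n : ℕ}
    (M : Matrix (Fin n) (Fin n) ℝ)
    (hpos : ∀ i j, 0 ≤ M i j)
    (hrow : ∀ i, ∑ j, M i j ≤ 1)
    (hpath : ∀ i, ∑ j, M i j = 1 →
      ∃ j, (∑ t, M j t) < 1 ∧
        Relation.ReflTransGen (fun a c => 0 < M a c) i j) :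
    specRadR M < 1 := by
  have hdef : ∀ i, ∃ k, ∑ j, (M ^ k) i j < 1 := fun i ↦ by
    rcases (hrow i).lt_or_eq with hi | hi
    · exact ⟨1, by simpa using hi⟩
    · obtain ⟨j, hj, hij⟩ := hpath i hi
      exact exists_sum_pow_apply_lt_one_of_reflTransGen hpos hrow hj hij
  obtain ⟨K, hK, hK0⟩ :=
    ((eventually_sum_pow_apply_lt_one hpos hrow hdef).and (eventually_ge_atTop 1)).exists
  refine specRadC_lt_of_forall_norm_lt one_pos fun μ hμ ↦ ?_
  obtain ⟨i, hi⟩ := exists_norm_pow_le_sum_pow_apply_of_mem_spectrum hpos K hμ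
  exact (pow_lt_one_iff_of_nonneg (norm_nonneg μ) (by omega)).1 (hi.trans_lt (hK i))
end

section
/- Let Q ∈ ℝ^{n×n} be a row-stochastic primitive matrix. Then the DeGroot iteration x(k+1) = Q x(k) reaches consensus: lim_{k→∞} x(k) = (wᵀ x(0)) · 𝟙, where w is the unique nonnegative left eigenvector of Q for eigenvalue 1 normalized to 𝟙ᵀ w = 1. -/
open Matrix Filter Polynomial Finset

section aux
variable {n : ℕ}

private lemma stoch_pow (Q : Matrix (Fin n) (Fin n) ℝ)
    (hpos : ∀ i j, 0 ≤ Q i j) (hstoch : ∀ i, ∑ j, Q i j = 1) (k : ℕ) :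
    (∀ i j, 0 ≤ (Q ^ k) i j) ∧ (∀ i, ∑ j, (Q ^ k) i j = 1) := by
  induction k with
  | zero =>
    constructor
    · intro i j
      simp [Matrix.one_apply]
      split <;> norm_num
    · intro i
      simp [Matrix.one_apply]
  | succ k ih =>
    rw [pow_succ]
    constructor
    · intro i j
      rw [Matrix.mul_apply]
      exact Finset.sum_nonneg fun l _ => mul_nonneg (ih.1 i l) (hpos l j)
    · intro i
      simp only [Matrix.mul_apply]
      rw [Finset.sum_comm]
      calc ∑ l, ∑ j, (Q ^ k) i l * Q l j = ∑ l, (Q ^ k) i l * ∑ j, Q l j := by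
            simp [Finset.mul_sum]
        _ = 1 := by simp [hstoch, ih.2 i]

variable [Nonempty (Fin n)]

private noncomputable def vmax (v : Fin n → ℝ) : ℝ := Finset.univ.sup' Finset.univ_nonempty v
private noncomputable def vmin (v : Fin n → ℝ) : ℝ := Finset.univ.inf' Finset.univ_nonempty v

private lemma le_vmax (v : Fin n → ℝ) (i : Fin n) : v i ≤ vmax v :=
  Finset.le_sup' v (Finset.mem_univ i)
private lemma vmin_le (v : Fin n → ℝ) (i : Fin n) : vmin v ≤ v i :=
  Finset.inf'_le v (Finset.mem_univ i)
private lemma vmin_le_vmax (v : Fin n → ℝ) : vmin v ≤ vmax v :=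
  (vmin_le v (Classical.arbitrary _)).trans (le_vmax v _)

/-- entries of `P *ᵥ v` lie in `[vmin v, vmax v]` for stochastic nonneg `P`. -/
private lemma mulVec_le_vmax (P : Matrix (Fin n) (Fin n) ℝ)
    (hpos : ∀ i j, 0 ≤ P i j) (hstoch : ∀ i, ∑ j, P i j = 1) (v : Fin n → ℝ) (i : Fin n) :
    (P *ᵥ v) i ≤ vmax v := by
  have : (P *ᵥ v) i = ∑ j, P i j * v j := rfl
  rw [this]
  calc ∑ j, P i j * v j ≤ ∑ j, P i j * vmax v :=
        Finset.sum_le_sum fun j _ => mul_le_mul_of_nonneg_left (le_vmax v j) (hpos i j)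
    _ = vmax v := by rw [← Finset.sum_mul, hstoch i, one_mul]

private lemma vmin_le_mulVec (P : Matrix (Fin n) (Fin n) ℝ)
    (hpos : ∀ i j, 0 ≤ P i j) (hstoch : ∀ i, ∑ j, P i j = 1) (v : Fin n → ℝ) (i : Fin n) :
    vmin v ≤ (P *ᵥ v) i := by
  have : (P *ᵥ v) i = ∑ j, P i j * v j := rfl
  rw [this]
  calc vmin v = ∑ j, P i j * vmin v := by rw [← Finset.sum_mul, hstoch i, one_mul]
    _ ≤ ∑ j, P i j * v j :=
        Finset.sum_le_sum fun j _ => mul_le_mul_of_nonneg_left (vmin_le v j) (hpos i j)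

private lemma vmax_mulVec_le (P : Matrix (Fin n) (Fin n) ℝ)
    (hpos : ∀ i j, 0 ≤ P i j) (hstoch : ∀ i, ∑ j, P i j = 1) (v : Fin n → ℝ) :
    vmax (P *ᵥ v) ≤ vmax v :=
  Finset.sup'_le _ _ fun i _ => mulVec_le_vmax P hpos hstoch v i

private lemma le_vmin_mulVec (P : Matrix (Fin n) (Fin n) ℝ)
    (hpos : ∀ i j, 0 ≤ P i j) (hstoch : ∀ i, ∑ j, P i j = 1) (v : Fin n → ℝ) :
    vmin v ≤ vmin (P *ᵥ v) :=
  Finset.le_inf' _ _ fun i _ => vmin_le_mulVec P hpos hstoch v i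

/-- Key contraction: if all entries of stochastic `P` are `≥ δ`, then the oscillation of
`P *ᵥ v` is at most `(1 - δ)` times the oscillation of `v`. -/
private lemma osc_contract (P : Matrix (Fin n) (Fin n) ℝ) (δ : ℝ) (hδ : 0 ≤ δ)
    (hent : ∀ i j, δ ≤ P i j) (hpos : ∀ i j, 0 ≤ P i j) (hstoch : ∀ i, ∑ j, P i j = 1)
    (v : Fin n → ℝ) :
    vmax (P *ᵥ v) - vmin (P *ᵥ v) ≤ (1 - δ) * (vmax v - vmin v) := by
  obtain ⟨j0, -, hj0⟩ := Finset.exists_mem_eq_inf' (Finset.univ_nonempty (α := Fin n)) v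
  obtain ⟨j1, -, hj1⟩ := Finset.exists_mem_eq_sup' (Finset.univ_nonempty (α := Fin n)) v
  have hMm : vmin v ≤ vmax v := vmin_le_vmax v
  -- upper bound for each entry
  have hup : ∀ i, (P *ᵥ v) i ≤ vmax v - δ * (vmax v - vmin v) := by
    intro i
    have h1 : (P *ᵥ v) i = P i j0 * v j0 + ∑ j ∈ Finset.univ.erase j0, P i j * v j := by
      rw [show (P *ᵥ v) i = ∑ j, P i j * v j from rfl,
        ← Finset.add_sum_erase _ _ (Finset.mem_univ j0)]
    have h2 : ∑ j ∈ Finset.univ.erase j0, P i j * v j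
        ≤ (1 - P i j0) * vmax v := by
      have hsum : ∑ j ∈ Finset.univ.erase j0, P i j = 1 - P i j0 := by
        have := Finset.add_sum_erase Finset.univ (P i) (Finset.mem_univ j0)
        rw [hstoch i] at this
        linarith
      calc ∑ j ∈ Finset.univ.erase j0, P i j * v j
          ≤ ∑ j ∈ Finset.univ.erase j0, P i j * vmax v :=
            Finset.sum_le_sum fun j _ => mul_le_mul_of_nonneg_left (le_vmax v j) (hpos i j)
        _ = (1 - P i j0) * vmax v := by rw [← Finset.sum_mul, hsum]
    have h3 : v j0 = vmin v := hj0.symm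
    have h4 : δ ≤ P i j0 := hent i j0
    nlinarith [mul_le_mul_of_nonneg_left hMm (hpos i j0)]
  have hlo : ∀ i, vmin v + δ * (vmax v - vmin v) ≤ (P *ᵥ v) i := by
    intro i
    have h1 : (P *ᵥ v) i = P i j1 * v j1 + ∑ j ∈ Finset.univ.erase j1, P i j * v j := by
      rw [show (P *ᵥ v) i = ∑ j, P i j * v j from rfl,
        ← Finset.add_sum_erase _ _ (Finset.mem_univ j1)]
    have h2 : (1 - P i j1) * vmin v ≤ ∑ j ∈ Finset.univ.erase j1, P i j * v j := by
      have hsum : ∑ j ∈ Finset.univ.erase j1, P i j = 1 - P i j1 := by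
        have := Finset.add_sum_erase Finset.univ (P i) (Finset.mem_univ j1)
        rw [hstoch i] at this
        linarith
      calc (1 - P i j1) * vmin v = ∑ j ∈ Finset.univ.erase j1, P i j * vmin v := by
            rw [← Finset.sum_mul, hsum]
        _ ≤ ∑ j ∈ Finset.univ.erase j1, P i j * v j :=
            Finset.sum_le_sum fun j _ => mul_le_mul_of_nonneg_left (vmin_le v j) (hpos i j)
    have h3 : v j1 = vmax v := hj1.symm
    have h4 : δ ≤ P i j1 := hent i j1
    nlinarith [mul_le_mul_of_nonneg_left hMm (hpos i j1)]
  have hA : vmax (P *ᵥ v) ≤ vmax v - δ * (vmax v - vmin v) :=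
    Finset.sup'_le _ _ fun i _ => hup i
  have hB : vmin v + δ * (vmax v - vmin v) ≤ vmin (P *ᵥ v) :=
    Finset.le_inf' _ _ fun i _ => hlo i
  nlinarith [mul_nonneg hδ (sub_nonneg.2 hMm)]

end aux

/-- DeGroot consensus: for a row-stochastic primitive matrix `Q`, the iteration
`x(k+1) = Q x(k)` converges to consensus `(wᵀ x(0)) 𝟙`, where `w` is the
nonnegative left eigenvector of `Q` for eigenvalue `1` normalized to sum `1`. -/
theorem degroot_consensus {n : ℕ} (Q : Matrix (Fin n) (Fin n) ℝ)
    (hpos : ∀ i j, 0 ≤ Q i j)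
    (hstoch : ∀ i, ∑ j, Q i j = 1)
    (hprim : ∃ m : ℕ, 0 < m ∧ ∀ i j, 0 < (Q ^ m) i j)
    (w : Fin n → ℝ)
    (hw : w ᵥ* Q = w) (hwpos : ∀ i, 0 ≤ w i) (hwnorm : ∑ i, w i = 1)
    (x0 : Fin n → ℝ) :
    Filter.Tendsto (fun k : ℕ => (Q ^ k) *ᵥ x0) Filter.atTop
      (nhds fun _ => ∑ i, w i * x0 i) := by
  rcases Nat.eq_zero_or_pos n with hn | hn
  · subst hn
    have : (fun k : ℕ => (Q ^ k) *ᵥ x0) = fun _ => (fun _ => ∑ i, w i * x0 i) := by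
      funext k
      exact Subsingleton.elim _ _
    rw [this]
    exact tendsto_const_nhds
  have : Nonempty (Fin n) := ⟨⟨0, hn⟩⟩
  obtain ⟨m, hm, hQm⟩ := hprim
  set y : ℕ → Fin n → ℝ := fun k => (Q ^ k) *ᵥ x0 with hy
  set t : ℝ := ∑ i, w i * x0 i with ht
  -- powers are stochastic
  have hpk := fun k => stoch_pow Q hpos hstoch k
  -- left eigenvector for all powers
  have hwk : ∀ k, w ᵥ* (Q ^ k) = w := by
    intro k
    induction k with
    | zero => simp
    | succ k ih => rw [pow_succ, ← Matrix.vecMul_vecMul, ih, hw]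
  -- the consensus value is conserved
  have htk : ∀ k, ∑ i, w i * y k i = t := by
    intro k
    have : ∑ i, w i * y k i = w ⬝ᵥ ((Q ^ k) *ᵥ x0) := rfl
    rw [this, Matrix.dotProduct_mulVec, hwk k]
    rfl
  -- t lies between vmin and vmax of y k
  have htmem : ∀ k, vmin (y k) ≤ t ∧ t ≤ vmax (y k) := by
    intro k
    constructor
    · calc vmin (y k) = ∑ i, w i * vmin (y k) := by
            rw [← Finset.sum_mul, hwnorm, one_mul]
        _ ≤ ∑ i, w i * y k i :=
            Finset.sum_le_sum fun i _ => mul_le_mul_of_nonneg_left (vmin_le (y k) i) (hwpos i)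
        _ = t := htk k
    · calc t = ∑ i, w i * y k i := (htk k).symm
        _ ≤ ∑ i, w i * vmax (y k) :=
            Finset.sum_le_sum fun i _ => mul_le_mul_of_nonneg_left (le_vmax (y k) i) (hwpos i)
        _ = vmax (y k) := by rw [← Finset.sum_mul, hwnorm, one_mul]
  -- oscillation
  set osc : ℕ → ℝ := fun k => vmax (y k) - vmin (y k) with hosc
  have hosc_nonneg : ∀ k, 0 ≤ osc k := fun k => sub_nonneg.2 (vmin_le_vmax (y k))
  -- basic step relation
  have hystep : ∀ k l, y (k + l) = (Q ^ k) *ᵥ y l := by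
    intro k l
    simp only [hy, pow_add, Matrix.mulVec_mulVec]
  -- osc antitone
  have hosc_anti : Antitone osc := by
    apply antitone_nat_of_succ_le
    intro k
    have h1 : y (k + 1) = Q *ᵥ y k := by rw [add_comm, hystep 1 k, pow_one]
    have := vmax_mulVec_le Q hpos hstoch (y k)
    have := le_vmin_mulVec Q hpos hstoch (y k)
    simp only [hosc, h1]
    linarith
  -- contraction constant
  set δ : ℝ := vmin (fun i => vmin (fun j => (Q ^ m) i j)) with hδdef
  have hδle : ∀ i j, δ ≤ (Q ^ m) i j := by
    intro i j
    exact le_trans (vmin_le _ i) (vmin_le _ j)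
  have hδpos : 0 < δ := by
    obtain ⟨i0, -, hi0⟩ := Finset.exists_mem_eq_inf' (Finset.univ_nonempty (α := Fin n))
      (fun i => vmin (fun j => (Q ^ m) i j))
    obtain ⟨j0, -, hj0⟩ := Finset.exists_mem_eq_inf' (Finset.univ_nonempty (α := Fin n))
      (fun j => (Q ^ m) i0 j)
    have : δ = (Q ^ m) i0 j0 := by rw [hδdef, vmin, hi0, vmin, hj0]
    rw [this]
    exact hQm i0 j0
  have hδ1 : δ ≤ 1 := by
    have h1 : (Q ^ m) (Classical.arbitrary _) (Classical.arbitrary _)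
        ≤ ∑ j, (Q ^ m) (Classical.arbitrary _) j :=
      Finset.single_le_sum (fun j _ => (hpk m).1 _ j) (Finset.mem_univ _)
    rw [(hpk m).2] at h1
    exact le_trans (hδle _ _) h1
  set c : ℝ := 1 - δ with hc
  have hc0 : 0 ≤ c := by linarith
  have hc1 : c < 1 := by linarith
  -- contraction at steps of m
  have hcon : ∀ k, osc (k + m) ≤ c * osc k := by
    intro k
    have h1 : y (k + m) = (Q ^ m) *ᵥ y k := by rw [add_comm, hystep m k]
    simp only [hosc, h1]
    exact osc_contract (Q ^ m) δ hδpos.le hδle (hpk m).1 (hpk m).2 (y k)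
  have hgeo : ∀ j, osc (j * m) ≤ c ^ j * osc 0 := by
    intro j
    induction j with
    | zero => simp
    | succ j ih =>
      calc osc ((j + 1) * m) = osc (j * m + m) := by ring_nf
        _ ≤ c * osc (j * m) := hcon (j * m)
        _ ≤ c * (c ^ j * osc 0) := mul_le_mul_of_nonneg_left ih hc0
        _ = c ^ (j + 1) * osc 0 := by ring
  have hbound : ∀ k, osc k ≤ c ^ (k / m) * osc 0 := by
    intro k
    calc osc k ≤ osc (k / m * m) := hosc_anti (Nat.div_mul_le_self k m)
      _ ≤ c ^ (k / m) * osc 0 := hgeo (k / m)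
  -- the bounding sequence tends to 0
  have hdiv : Tendsto (fun k : ℕ => k / m) atTop atTop :=
    tendsto_atTop_atTop.2 fun b => ⟨b * m, fun a ha => (Nat.le_div_iff_mul_le hm).2 ha⟩
  have hg0 : Tendsto (fun k : ℕ => c ^ (k / m) * osc 0) atTop (nhds 0) := by
    have := ((tendsto_pow_atTop_nhds_zero_of_lt_one hc0 hc1).comp hdiv).mul_const (osc 0)
    simpa using this
  rw [tendsto_pi_nhds]
  intro i
  rw [tendsto_sub_nhds_zero_iff.symm]
  refine squeeze_zero_norm (fun k => ?_) hg0
  have h1 := le_vmax (y k) i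
  have h2 := vmin_le (y k) i
  have h3 := (htmem k).1
  have h4 := (htmem k).2
  have h5 := hbound k
  rw [Real.norm_eq_abs, abs_le]
  constructor <;> simp only [hosc] at h5 <;> linarith
end
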